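/- arXiv:math/0609119 — 2 statements merged into one kernel-verified Lean document; each statement's English description precedes it below -/
import Mathlib

section
/- Let n ≥ k ≥ 2, let 𝔽 be a field and let S_k ⊆ C([n],k). For every (k+1)-element face X of ⟨S_k⟩, the support of ∂_{k+1}X (regarded as a vector of 𝔽^{S_k}) is a circuit of Sim_k^n(S_k) with exactly k+1 elements; conversely, every circuit of Sim_k^n(S_k) with exactly k+1 elements equals supp(∂_{k+1}X) for some (k+1)-element face X of ⟨S_k⟩. -/
/-!
Common definitions for simplicial matroids, following Cordovil–Lemos–Linhares Sales,
"Dirac's theorem on simplicial matroids".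

We model `[n] = {1,…,n}` by `Fin n`, and a subset of `[n]` by a `Finset (Fin n)`.
A family `S_k ⊆ C([n],k)` is a `Finset (Finset (Fin n))` (all of whose members
have cardinality `k`, which is imposed by hypotheses in the theorems).
-/

open Finset

/-- The incidence number `[F' : F]`: if `F = i₁ < i₂ < ⋯ < iₘ` and `F' = F \ {iⱼ}`
then `[F' : F] = (-1)ʲ` (with `j` the 1-based position of the deleted element),
and `[F' : F] = 0` otherwise. -/
def inc {n : ℕ} (F' F : Finset (Fin n)) : ℤ :=
  ∑ i ∈ F, if F' = F.erase i then (-1 : ℤ) ^ (F.filter (fun j => j ≤ i)).card else 0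

/-- The family `C([n], m)` of `m`-element subsets of `[n]`, as a type. -/
abbrev Csets (n m : ℕ) := {F : Finset (Fin n) // F.card = m}

/-- `∂_k F`, the boundary of a single `k`-subset `F` of `[n]`,
as a vector of `𝔽^{C([n],k-1)}`. -/
def bvec (𝔽 : Type*) [Field 𝔽] (n k : ℕ) (F : Finset (Fin n)) : Csets n (k - 1) → 𝔽 :=
  fun F' => ((inc F'.1 F : ℤ) : 𝔽)

/-- Independence in the simplicial matroid `Sim_k^n(S_k)` over `𝔽`:
`X ⊆ S_k` is independent iff the vectors `∂_k F`, `F ∈ X`, are linearly independent. -/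
def SimIndep (𝔽 : Type*) [Field 𝔽] (n k : ℕ) (Sk X : Finset (Finset (Fin n))) : Prop :=
  X ⊆ Sk ∧ LinearIndependent 𝔽 (fun F : X => bvec 𝔽 n k F.1)

/-- A circuit of `Sim_k^n(S_k)`: a minimal dependent subset of the ground set. -/
def SimCircuit (𝔽 : Type*) [Field 𝔽] (n k : ℕ) (Sk C : Finset (Finset (Fin n))) : Prop :=
  C ⊆ Sk ∧ ¬ LinearIndependent 𝔽 (fun F : C => bvec 𝔽 n k F.1) ∧
    ∀ C' ⊂ C, LinearIndependent 𝔽 (fun F : C' => bvec 𝔽 n k F.1)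

/-- The rank (in `Sim_k^n`) of a set `X` of `k`-subsets of `[n]`:
the dimension of the span of the boundaries of its members. -/
noncomputable def simRank (𝔽 : Type*) [Field 𝔽] (n k : ℕ) (X : Finset (Finset (Fin n))) : ℕ :=
  Module.finrank 𝔽 (Submodule.span 𝔽 ((fun F => bvec 𝔽 n k F) '' (X : Set (Finset (Fin n)))))

/-- A cocircuit of `Sim_k^n(S_k)`, i.e. a circuit of the dual matroid:
a minimal set `C ⊆ S_k` whose complement does not span (`X` is independent in the dual
matroid iff `r(E ∖ X) = r(E)`). -/
def SimCocircuit (𝔽 : Type*) [Field 𝔽] (n k : ℕ) (Sk C : Finset (Finset (Fin n))) : Prop :=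
  C ⊆ Sk ∧ simRank 𝔽 n k (Sk \ C) < simRank 𝔽 n k Sk ∧
    ∀ C' ⊂ C, simRank 𝔽 n k (Sk \ C') = simRank 𝔽 n k Sk

/-- The boundary map `∂_k : 𝔽^{S_k} → 𝔽^{C([n],k-1)}`. -/
noncomputable def bdryMap (𝔽 : Type*) [Field 𝔽] (n k : ℕ) (Sk : Finset (Finset (Fin n))) :
    (↥Sk → 𝔽) →ₗ[𝔽] (Csets n (k - 1) → 𝔽) :=
  Matrix.mulVecLin (Matrix.of fun (F' : Csets n (k - 1)) (F : ↥Sk) => ((inc F'.1 F.1 : ℤ) : 𝔽))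

/-- The coboundary `δ^{k-1} V` of a `(k-1)`-subset `V` of `[n]`,
as a vector of `𝔽^{S_k}`; its `F`-coordinate is `[V : F]`. -/
def cobdry (𝔽 : Type*) [Field 𝔽] {n : ℕ} (Sk : Finset (Finset (Fin n)))
    (V : Finset (Fin n)) : ↥Sk → 𝔽 :=
  fun F => ((inc V F.1 : ℤ) : 𝔽)

/-- The boundary `∂_{k+1} X` of a `(k+1)`-subset `X` of `[n]`, regarded as a vector
of `𝔽^{S_k}`; its `F`-coordinate is `[F : X]`. -/
def pbdry (𝔽 : Type*) [Field 𝔽] {n : ℕ} (Sk : Finset (Finset (Fin n)))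
    (X : Finset (Fin n)) : ↥Sk → 𝔽 :=
  fun F => ((inc F.1 X : ℤ) : 𝔽)

open scoped Classical in
/-- The support of a vector of `𝔽^{S_k}`, as a set of `k`-subsets of `[n]`. -/
noncomputable def suppFin {𝔽 : Type*} [Field 𝔽] {n : ℕ} {Sk : Finset (Finset (Fin n))}
    (v : ↥Sk → 𝔽) : Finset (Finset (Fin n)) :=
  (Sk.attach.filter fun F => v F ≠ 0).image Subtype.val

/-- `supp(δ^{k-1} V) ⊆ S_k`. -/
noncomputable def suppδ (𝔽 : Type*) [Field 𝔽] {n : ℕ} (Sk : Finset (Finset (Fin n)))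
    (V : Finset (Fin n)) : Finset (Finset (Fin n)) :=
  suppFin (cobdry 𝔽 Sk V)

/-- The cocircuit space of `Sim_k^n(S_k)`: the orthogonal complement, with respect to the
standard bilinear form on `𝔽^{S_k}`, of the circuit space `ker ∂_k`. -/
noncomputable def cocircSpace (𝔽 : Type*) [Field 𝔽] (n k : ℕ) (Sk : Finset (Finset (Fin n))) :
    Submodule 𝔽 (↥Sk → 𝔽) where
  carrier := {w | ∀ v ∈ LinearMap.ker (bdryMap 𝔽 n k Sk), ∑ F, v F * w F = 0}
  zero_mem' := by intro v hv; simp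
  add_mem' := by
    intro a b ha hb v hv
    have h1 := ha v hv
    have h2 := hb v hv
    simp only [Pi.add_apply, mul_add, Finset.sum_add_distrib]
    rw [h1, h2, add_zero]
  smul_mem' := by
    intro c w hw v hv
    have h := hw v hv
    simp only [Pi.smul_apply, smul_eq_mul]
    calc ∑ F, v F * (c * w F) = ∑ F, c * (v F * w F) := by
          exact Finset.sum_congr rfl fun F _ => by ring
      _ = c * ∑ F, v F * w F := (Finset.mul_sum _ _ _).symm
      _ = 0 := by rw [h, mul_zero]

/-- The faces of the `k`-hyperclique complex `⟨S_k⟩`: all `F ⊆ [n]` with `|F| < k`,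
together with all `F` every `k`-element subset of which lies in `S_k`. -/
def IsFace {n : ℕ} (k : ℕ) (Sk : Finset (Finset (Fin n))) (F : Finset (Fin n)) : Prop :=
  F.card < k ∨ ∀ G ⊆ F, G.card = k → G ∈ Sk

/-- A facet of `⟨S_k⟩`: an inclusion-maximal face. -/
def IsFacet {n : ℕ} (k : ℕ) (Sk : Finset (Finset (Fin n))) (F : Finset (Fin n)) : Prop :=
  IsFace k Sk F ∧ ∀ G, IsFace k Sk G → F ⊆ G → F = G

/-- `V` is simplicial in `⟨S_k⟩` if there is exactly one facet `X` of `⟨S_k⟩`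
with `V ⊊ X`. -/
def SimplicialFace {n : ℕ} (k : ℕ) (Sk : Finset (Finset (Fin n))) (V : Finset (Fin n)) : Prop :=
  ∃! X, IsFacet k Sk X ∧ V ⊂ X

/-- The `k`-skeleta of the complexes `Δ_0 = ⟨S_k⟩`, `Δ_{j+1} = Δ_j ∖∖ V_j`, where
`Δ ∖∖ V = ⟨(skeleton of Δ) ∖ supp(δ^{k-1} V)⟩` (0-indexed). -/
noncomputable def delSeq (𝔽 : Type*) [Field 𝔽] {n : ℕ} (Sk : Finset (Finset (Fin n)))
    (V : ℕ → Finset (Fin n)) : ℕ → Finset (Finset (Fin n))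
  | 0 => Sk
  | j + 1 => delSeq 𝔽 Sk V j \ suppδ 𝔽 (delSeq 𝔽 Sk V j) (V j)

/-- `C*_j := supp(δ^{k-1} V_j) ∖ ⋃_{i<j} supp(δ^{k-1} V_i)` (0-indexed). -/
noncomputable def Cstar (𝔽 : Type*) [Field 𝔽] {n : ℕ} (Sk : Finset (Finset (Fin n)))
    (V : ℕ → Finset (Fin n)) (j : ℕ) : Finset (Finset (Fin n)) :=
  suppδ 𝔽 Sk (V j) \ (Finset.range j).biUnion (fun i => suppδ 𝔽 Sk (V i))

/-- `(V_1,…,V_r)` (0-indexed: `V 0, …, V (r-1)`) is a basic linear sequence for `⟨S_k⟩`,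
where `r` is the rank of `Sim_k^n(S_k)`: each `V_j` is a `(k-1)`-subset of `[n]` and each
`C*_j` is a cocircuit of `Sim_k^n(S_k(Δ_{j-1}))`. -/
def BasicLinearSeq (𝔽 : Type*) [Field 𝔽] (n k : ℕ) (Sk : Finset (Finset (Fin n))) (r : ℕ)
    (V : ℕ → Finset (Fin n)) : Prop :=
  simRank 𝔽 n k Sk = r ∧ (∀ j < r, (V j).card = k - 1) ∧
    ∀ j < r, SimCocircuit 𝔽 n k (delSeq 𝔽 Sk V j) (Cstar 𝔽 Sk V j)

/-- `⟨S_k⟩` is D-perfect: there is a basic linear sequence `V_1,…,V_r` such that each `V_j`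
is simplicial in `Δ_{j-1}`. -/
def DPerfect (𝔽 : Type*) [Field 𝔽] (n k : ℕ) (Sk : Finset (Finset (Fin n))) : Prop :=
  ∃ V : ℕ → Finset (Fin n),
    BasicLinearSeq 𝔽 n k Sk (simRank 𝔽 n k Sk) V ∧
      ∀ j < simRank 𝔽 n k Sk, SimplicialFace k (delSeq 𝔽 Sk V j) (V j)

/-- A flat of `Sim_k^n(S_k)`: a closed subset of the ground set. -/
def SimFlat (𝔽 : Type*) [Field 𝔽] (n k : ℕ) (Sk X : Finset (Finset (Fin n))) : Prop :=
  X ⊆ Sk ∧ ∀ F ∈ Sk,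
    bvec 𝔽 n k F ∈ Submodule.span 𝔽 ((fun G => bvec 𝔽 n k G) '' (X : Set (Finset (Fin n)))) →
      F ∈ X

/-- A hyperplane of `Sim_k^n(S_k)`: a flat of rank one less than the rank of the matroid. -/
def SimHyperplane (𝔽 : Type*) [Field 𝔽] (n k : ℕ) (Sk H : Finset (Finset (Fin n))) : Prop :=
  SimFlat 𝔽 n k Sk H ∧ simRank 𝔽 n k H + 1 = simRank 𝔽 n k Sk

/-- A modular flat of `Sim_k^n(S_k)`:
`r(X) + r(Y) = r(X ∪ Y) + r(X ∩ Y)` for every flat `Y`. -/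
def ModularFlat (𝔽 : Type*) [Field 𝔽] (n k : ℕ) (Sk X : Finset (Finset (Fin n))) : Prop :=
  SimFlat 𝔽 n k Sk X ∧ ∀ Y, SimFlat 𝔽 n k Sk Y →
    simRank 𝔽 n k X + simRank 𝔽 n k Y = simRank 𝔽 n k (X ∪ Y) + simRank 𝔽 n k (X ∩ Y)

open scoped Classical in
/-- The closure of `X` in `Sim_k^n(S_k)`. -/
noncomputable def simClosure (𝔽 : Type*) [Field 𝔽] (n k : ℕ)
    (Sk X : Finset (Finset (Fin n))) : Finset (Finset (Fin n)) :=
  Sk.filter fun F =>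
    bvec 𝔽 n k F ∈ Submodule.span 𝔽 ((fun G => bvec 𝔽 n k G) '' (X : Set (Finset (Fin n))))

/-- `Sim_k^n(S_k)` is supersolvable: it admits a maximal chain of modular flats
`cl(∅) = X_0 ⊊ X_1 ⊊ ⋯ ⊊ X_r = S_k`, `r` the rank. -/
def Supersolvable (𝔽 : Type*) [Field 𝔽] (n k : ℕ) (Sk : Finset (Finset (Fin n))) : Prop :=
  ∃ X : ℕ → Finset (Finset (Fin n)),
    X 0 = simClosure 𝔽 n k Sk ∅ ∧ X (simRank 𝔽 n k Sk) = Sk ∧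
      (∀ i < simRank 𝔽 n k Sk, X i ⊂ X (i + 1)) ∧
      ∀ i ≤ simRank 𝔽 n k Sk, ModularFlat 𝔽 n k Sk (X i)

/-- `H` is a dense hyperplane of `Sim_k^n(ground)`: a hyperplane of the form
`ground ∖ supp(δ^{k-1} V)` for some `(k-1)`-subset `V` simplicial in `⟨ground⟩`. -/
def DenseHyp (𝔽 : Type*) [Field 𝔽] (n k : ℕ) (ground H : Finset (Finset (Fin n))) : Prop :=
  SimHyperplane 𝔽 n k ground H ∧
    ∃ V : Finset (Fin n), V.card = k - 1 ∧ SimplicialFace k ground V ∧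
      H = ground \ suppδ 𝔽 ground V

/-- `Sim_k^n(S_k)` is superdense: there is a chain `∅ = X_0 ⊊ X_1 ⊊ ⋯ ⊊ X_r = S_k` of flats
(`r` the rank) with each `X_i` a dense hyperplane of `Sim_k^n(X_{i+1})`. -/
def Superdense (𝔽 : Type*) [Field 𝔽] (n k : ℕ) (Sk : Finset (Finset (Fin n))) : Prop :=
  ∃ X : ℕ → Finset (Finset (Fin n)),
    X 0 = ∅ ∧ X (simRank 𝔽 n k Sk) = Sk ∧
      (∀ i ≤ simRank 𝔽 n k Sk, SimFlat 𝔽 n k Sk (X i)) ∧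
      (∀ i < simRank 𝔽 n k Sk, X i ⊂ X (i + 1)) ∧
      ∀ i < simRank 𝔽 n k Sk, DenseHyp 𝔽 n k (X (i + 1)) (X i)

/-- `Sim_k^n(S_k)` is triangulable over `𝔽`: the boundaries of the `(k+1)`-faces of `⟨S_k⟩`
span the circuit space `ker ∂_k`. -/
def Triangulable (𝔽 : Type*) [Field 𝔽] (n k : ℕ) (Sk : Finset (Finset (Fin n))) : Prop :=
  Submodule.span 𝔽
      {v : ↥Sk → 𝔽 | ∃ X : Finset (Fin n), X.card = k + 1 ∧ IsFace k Sk X ∧ v = pbdry 𝔽 Sk X}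
    = LinearMap.ker (bdryMap 𝔽 n k Sk)

/-- `Sim_k^n(S_k)` is strongly triangulable over `𝔽`: there are `(k+1)`-faces `X_1,…,X_{m'}`
of `⟨S_k⟩` whose boundaries span `ker ∂_k` and such that every circuit `C` has a
representing vector `C⃗` with support `C` which is a combination, with nonzero coefficients,
of boundaries `∂_{k+1} X_{i_j}` with `⋃_{F ∈ C} F = ⋃_j X_{i_j}`. -/
def StronglyTriangulable (𝔽 : Type*) [Field 𝔽] (n k : ℕ)
    (Sk : Finset (Finset (Fin n))) : Prop :=
  ∃ (m' : ℕ) (Xs : Fin m' → Finset (Fin n)),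
    (∀ i, (Xs i).card = k + 1 ∧ IsFace k Sk (Xs i)) ∧
    Submodule.span 𝔽 (Set.range fun i => pbdry 𝔽 Sk (Xs i)) = LinearMap.ker (bdryMap 𝔽 n k Sk) ∧
    ∀ C, SimCircuit 𝔽 n k Sk C →
      ∃ (s : ℕ) (idx : Fin s → Fin m') (a : Fin s → 𝔽) (Cv : ↥Sk → 𝔽),
        (∀ j, a j ≠ 0) ∧ suppFin Cv = C ∧
        Cv = ∑ j, a j • pbdry 𝔽 Sk (Xs (idx j)) ∧
        C.biUnion id = Finset.univ.biUnion fun j : Fin s => Xs (idx j)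

/-- The simple graph `([n], S_2)`. -/
def graphOf {n : ℕ} (S2 : Finset (Finset (Fin n))) : SimpleGraph (Fin n) where
  Adj u v := u ≠ v ∧ ({u, v} : Finset (Fin n)) ∈ S2
  symm := by
    constructor
    intro u v h
    exact ⟨h.1.symm, by rw [Finset.pair_comm]; exact h.2⟩
  loopless := by constructor; intro u h; exact h.1 rfl

/-- A simple graph is chordal if every cycle of length at least four has a chord, i.e. an
edge of the graph joining two non-consecutive vertices of the cycle. -/
def Chordal {α : Type*} (G : SimpleGraph α) : Prop :=
  ∀ (v : α) (w : G.Walk v v), w.IsCycle → 4 ≤ w.length →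
    ∃ u₁ u₂, u₁ ∈ w.support ∧ u₂ ∈ w.support ∧ G.Adj u₁ u₂ ∧ s(u₁, u₂) ∉ w.edges


/-!
A `(k+1)`-face `X` has boundary supported on its `k+1` facets `X ∖ {i}`; `∂∂ = 0` makes them
dependent, and each facet `X ∖ {i}` owns the coordinate `X ∖ {i, j}`, on which no other facet
except the removed `X ∖ {j}` is nonzero, so dropping any one of them leaves an independent set.

Conversely, in a circuit `C` every element has a nonzero coefficient in the dependency, so each
`(k-1)`-face of a member of `C` must be cancelled by another member. For `k+1` sets of size `k`
this forces the shape of `∂X`: the `k` facets of a fixed `F₀ ∈ C` are covered by the `k` other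
members, which are therefore `F₀ ∖ {a} ∪ {y a}`; covering the facets of these again shows that
`y a` does not depend on `a`, and `C` consists of the facets of `X = F₀ ∪ {y}`.
-/

open Finset

section Incidence

variable {n : ℕ}

lemma inc_eq_zero {F' F : Finset (Fin n)} (h : ∀ i ∈ F, F' ≠ F.erase i) : inc F' F = 0 :=
  sum_eq_zero fun i hi => if_neg (h i hi)

lemma inc_erase {F : Finset (Fin n)} {i : Fin n} (hi : i ∈ F) :
    inc (F.erase i) F = (-1) ^ #{j ∈ F | j ≤ i} := by
  rw [inc, sum_eq_single_of_mem i hi fun j hj hji =>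
    if_neg fun h => hji ((erase_inj F hj).mp h.symm), if_pos rfl]

lemma inc_cast_ne_zero_iff (𝔽 : Type*) [Field 𝔽] {F' F : Finset (Fin n)} :
    ((inc F' F : ℤ) : 𝔽) ≠ 0 ↔ ∃ i ∈ F, F' = F.erase i := by
  constructor
  · intro h
    by_contra! hF
    exact h (by rw [inc_eq_zero hF, Int.cast_zero])
  · rintro ⟨i, hi, rfl⟩
    rw [inc_erase hi]
    push_cast
    exact pow_ne_zero _ (by norm_num)

lemma card_filter_le_erase_add {X : Finset (Fin n)} {i : Fin n} (hi : i ∈ X) (j : Fin n) :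
    #{m ∈ X.erase i | m ≤ j} + (if i ≤ j then 1 else 0) = #{m ∈ X | m ≤ j} := by
  rw [filter_erase]
  split_ifs with hij
  · exact card_erase_add_one (mem_filter.mpr ⟨hi, hij⟩)
  · rw [erase_eq_of_notMem (s := {m ∈ X | m ≤ j}) (by simp [hij]), add_zero]

/-- The sign with which `X ∖ {i, j}` occurs in `∂ (X ∖ {i})`, times that of `X ∖ {i}` in `∂ X`. -/
def incSign (X : Finset (Fin n)) (i j : Fin n) : ℤ :=
  (-1) ^ (#{m ∈ X.erase i | m ≤ j} + #{m ∈ X | m ≤ i})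

lemma incSign_swap {X : Finset (Fin n)} {i j : Fin n} (hi : i ∈ X) (hj : j ∈ X) (hij : i ≠ j) :
    incSign X j i = -incSign X i j := by
  have hi' := card_filter_le_erase_add hi j
  have hj' := card_filter_le_erase_add hj i
  unfold incSign
  rcases hij.lt_or_gt with h | h
  · rw [if_pos h.le] at hi'
    rw [if_neg (not_le.mpr h)] at hj'
    rw [show #{m ∈ X.erase j | m ≤ i} + #{m ∈ X | m ≤ j} =
      #{m ∈ X.erase i | m ≤ j} + #{m ∈ X | m ≤ i} + 1 by omega, pow_succ]
    ring
  · rw [if_pos h.le] at hj'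
    rw [if_neg (not_le.mpr h)] at hi'
    rw [show #{m ∈ X.erase i | m ≤ j} + #{m ∈ X | m ≤ i} =
      #{m ∈ X.erase j | m ≤ i} + #{m ∈ X | m ≤ j} + 1 by omega, pow_succ]
    ring

lemma inc_erase_mul_inc_erase (X F' : Finset (Fin n)) {i : Fin n} (hi : i ∈ X) :
    inc F' (X.erase i) * inc (X.erase i) X =
      ∑ j ∈ X.erase i, if F' = (X.erase i).erase j then incSign X i j else 0 := by
  rw [inc_erase hi, inc, sum_mul]
  refine sum_congr rfl fun j _ => ?_
  split_ifs <;> simp [incSign, pow_add]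

/-- `∂ ∂ = 0`. -/
theorem sum_inc_mul_inc_erase (X F' : Finset (Fin n)) :
    ∑ i ∈ X, inc F' (X.erase i) * inc (X.erase i) X = 0 := by
  set f : Fin n → Fin n → ℤ := fun i j => if F' = (X.erase i).erase j then incSign X i j else 0
  have hanti : ∀ i ∈ X, ∀ j ∈ X.erase i, f j i = -f i j := by
    intro i hi j hj
    obtain ⟨hji, hjX⟩ := mem_erase.mp hj
    simp only [f, erase_right_comm (s := X) (a := j)]
    split_ifs
    · exact incSign_swap hi hjX hji.symm
    · rw [neg_zero]
  have hswap : ∑ i ∈ X, ∑ j ∈ X.erase i, f i j = ∑ j ∈ X, ∑ i ∈ X.erase j, f i j :=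
    sum_comm' fun i j => by simp only [mem_erase]; tauto
  rw [sum_congr rfl fun i hi => inc_erase_mul_inc_erase X F' hi]
  change ∑ i ∈ X, ∑ j ∈ X.erase i, f i j = 0
  have hneg : ∑ j ∈ X, ∑ i ∈ X.erase j, f i j = -∑ i ∈ X, ∑ j ∈ X.erase i, f i j := by
    rw [← sum_neg_distrib]
    exact sum_congr rfl fun j hj => by
      rw [← sum_neg_distrib]; exact sum_congr rfl fun i hi => hanti j hj i hi
  omega

end Incidence

section LinearAlgebra

variable {R ι κ : Type*} [Ring R] {v : ι → κ → R}

lemma exists_ne_apply_ne_zero_of_sum_eq_zero [NoZeroDivisors R] {s : Finset ι} {g : ι → R}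
    (hsum : ∑ i ∈ s, g i • v i = 0) {i : ι} (hi : i ∈ s) (hg : g i ≠ 0) {c : κ}
    (hc : v i c ≠ 0) : ∃ j ∈ s, j ≠ i ∧ v j c ≠ 0 := by
  by_contra! h
  have hsum_c := congrFun hsum c
  simp only [Finset.sum_apply, Pi.smul_apply, smul_eq_mul, Pi.zero_apply] at hsum_c
  rw [sum_eq_single_of_mem i hi fun j hj hji => by rw [h j hj hji, mul_zero]] at hsum_c
  exact mul_ne_zero hg hc hsum_c

lemma linearIndepOn_finset_of_forall_exists_apply_ne_zero [NoZeroDivisors R] {s : Finset ι}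
    (h : ∀ i ∈ s, ∃ c, v i c ≠ 0 ∧ ∀ j ∈ s, j ≠ i → v j c = 0) : LinearIndepOn R v s := by
  refine linearIndepOn_finset_iff.mpr fun g hsum i hi => ?_
  by_contra hg
  obtain ⟨c, hc, hprivate⟩ := h i hi
  obtain ⟨j, hj, hji, hjc⟩ := exists_ne_apply_ne_zero_of_sum_eq_zero hsum hi hg hc
  exact hjc (hprivate j hj hji)

lemma exists_sum_eq_zero_forall_ne_zero_of_minimal {s : Finset ι}
    (hdep : ¬ LinearIndepOn R v s) (hmin : ∀ t ⊂ s, LinearIndepOn R v t) :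
    ∃ g : ι → R, ∑ i ∈ s, g i • v i = 0 ∧ ∀ i ∈ s, g i ≠ 0 := by
  classical
  obtain ⟨g, hsum, i₀, hi₀, hg₀⟩ := not_linearIndepOn_finset_iff.mp hdep
  refine ⟨g, hsum, fun i hi hgi => hg₀ ?_⟩
  have hne : i₀ ≠ i := fun h => hg₀ (h ▸ hgi)
  refine linearIndepOn_finset_iff.mp (hmin _ (erase_ssubset hi)) g ?_ i₀ (mem_erase.mpr ⟨hne, hi₀⟩)
  rwa [sum_erase _ (by rw [hgi, zero_smul])]

end LinearAlgebra

section FacetsShared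

variable {α : Type*} [DecidableEq α]

def FacetsShared (C : Finset (Finset α)) : Prop :=
  ∀ F ∈ C, ∀ i ∈ F, ∃ G ∈ C, G ≠ F ∧ F.erase i ⊆ G

variable {k : ℕ} {C : Finset (Finset α)}

lemma FacetsShared.exists_insert_erase_mem (hshared : FacetsShared C)
    (hC : ∀ F ∈ C, F.card = k) {F : Finset α} (hF : F ∈ C) {a : α} (ha : a ∈ F) :
    ∃ y ∉ F, insert y (F.erase a) ∈ C := by
  obtain ⟨G, hG, hGF, hsub⟩ := hshared F hF a ha
  obtain ⟨y, hy, rfl⟩ := exists_eq_insert_iff.mpr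
    ⟨hsub, by rw [card_erase_add_one ha, hC F hF, hC G hG]⟩
  refine ⟨y, fun hyF => hGF ?_, hG⟩
  obtain rfl : y = a := by by_contra h; exact hy (mem_erase.mpr ⟨h, hyF⟩)
  exact insert_erase ha

lemma mem_insert_erase_iff_ne {s : Finset α} {a x y : α} (hy : y ∉ s) (hx : x ∈ s) :
    x ∈ insert y (s.erase a) ↔ x ≠ a := by
  grind

theorem FacetsShared.exists_eq_image_erase (hshared : FacetsShared C) (hk : 1 ≤ k)
    (hC : ∀ F ∈ C, F.card = k) (hcard : C.card = k + 1) :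
    ∃ X : Finset α, X.card = k + 1 ∧ C = X.image X.erase := by
  obtain ⟨F₀, hF₀⟩ : C.Nonempty := card_pos.mp (by omega)
  choose! y hyF₀ hyC using fun a (ha : a ∈ F₀) => hshared.exists_insert_erase_mem hC hF₀ ha
  set N : α → Finset α := fun a => insert (y a) (F₀.erase a)
  have hmemN : ∀ a ∈ F₀, ∀ x ∈ F₀, x ∈ N a ↔ x ≠ a := fun a ha x hx =>
    mem_insert_erase_iff_ne (hyF₀ a ha) hx
  have hN_injOn : Set.InjOn N F₀ := by
    intro a ha b hb hab
    by_contra hne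
    exact (hmemN a ha a ha).mp (hab ▸ (hmemN b hb a ha).mpr hne) rfl
  have hN_surj : ∀ G ∈ C, G ≠ F₀ → ∃ a ∈ F₀, N a = G := by
    have himage : F₀.image N = C.erase F₀ := by
      refine eq_of_subset_of_card_le (fun G hG => ?_) ?_
      · obtain ⟨a, ha, rfl⟩ := mem_image.mp hG
        refine mem_erase.mpr ⟨fun h => ?_, hyC a ha⟩
        exact hyF₀ a ha (h ▸ mem_insert_self _ _)
      · rw [card_image_of_injOn hN_injOn, card_erase_of_mem hF₀, hcard, hC F₀ hF₀]; rfl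
    intro G hG hGF₀
    exact mem_image.mp (himage ▸ mem_erase.mpr ⟨hGF₀, hG⟩)
  have hy_const : ∀ a ∈ F₀, ∀ b ∈ F₀, y a = y b := by
    intro a ha b hb
    rcases eq_or_ne a b with rfl | hab
    · rfl
    obtain ⟨H, hH, hHa, hsub⟩ := hshared (N a) (hyC a ha) b ((hmemN a ha b hb).mpr hab.symm)
    have hya : y a ∈ H := hsub (mem_erase.mpr
      ⟨fun h => hyF₀ a ha (h ▸ hb), mem_insert_self _ _⟩)
    obtain ⟨c, hc, rfl⟩ := hN_surj H hH fun h => hyF₀ a ha (h ▸ hya)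
    obtain rfl : c = b := by
      by_contra hcb
      have hca : c ≠ a := fun h => hHa (h ▸ rfl)
      exact (hmemN c hc c hc).mp (hsub (mem_erase.mpr ⟨hcb, (hmemN a ha c hc).mpr hca⟩)) rfl
    rcases mem_insert.mp hya with h | h
    · exact h
    · exact absurd (mem_of_mem_erase h) (hyF₀ a ha)
  obtain ⟨a₀, ha₀⟩ : F₀.Nonempty := card_pos.mp (by rw [hC F₀ hF₀]; omega)
  set X := insert (y a₀) F₀
  have hX : X.card = k + 1 := by rw [card_insert_of_notMem (hyF₀ a₀ ha₀), hC F₀ hF₀]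
  refine ⟨X, hX, (eq_of_subset_of_card_le (fun G hG => ?_) ?_).symm⟩
  · obtain ⟨x, hx, rfl⟩ := mem_image.mp hG
    rcases mem_insert.mp hx with rfl | hx
    · rwa [erase_insert (hyF₀ _ ha₀)]
    · rw [erase_insert_of_ne (ne_of_mem_of_not_mem hx (hyF₀ a₀ ha₀)).symm, hy_const a₀ ha₀ x hx]
      exact hyC x hx
  · rw [hcard, card_image_of_injOn (erase_injOn X), hX]

end FacetsShared

section SimplicialMatroid

variable (𝔽 : Type*) [Field 𝔽] {n : ℕ}

lemma simCircuit_iff {k : ℕ} {Sk C : Finset (Finset (Fin n))} :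
    SimCircuit 𝔽 n k Sk C ↔ C ⊆ Sk ∧ ¬ LinearIndepOn 𝔽 (bvec 𝔽 n k) (C : Set (Finset (Fin n))) ∧
      ∀ C' ⊂ C, LinearIndepOn 𝔽 (bvec 𝔽 n k) (C' : Set (Finset (Fin n))) :=
  Iff.rfl

lemma suppFin_pbdry {Sk : Finset (Finset (Fin n))} {X : Finset (Fin n)}
    (hX : ∀ i ∈ X, X.erase i ∈ Sk) : suppFin (pbdry 𝔽 Sk X) = X.image X.erase := by
  ext F
  simp only [suppFin, pbdry, mem_image, mem_filter, mem_attach, true_and,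
    inc_cast_ne_zero_iff, Subtype.exists, exists_and_right, exists_eq_right]
  constructor
  · rintro ⟨-, i, hi, rfl⟩
    exact ⟨i, hi, rfl⟩
  · rintro ⟨i, hi, rfl⟩
    exact ⟨hX i hi, i, hi, rfl⟩

lemma bvec_erase_apply_ne_zero (k : ℕ) {F : Finset (Fin n)} {i : Fin n} (hi : i ∈ F)
    (hc : (F.erase i).card = k - 1) : bvec 𝔽 n k F ⟨F.erase i, hc⟩ ≠ 0 :=
  (inc_cast_ne_zero_iff 𝔽).mpr ⟨i, hi, rfl⟩

lemma not_linearIndepOn_image_erase (k : ℕ) (X : Finset (Fin n)) (hX : X.Nonempty) :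
    ¬ LinearIndepOn 𝔽 (bvec 𝔽 n k) (X.image X.erase : Set (Finset (Fin n))) := by
  rw [not_linearIndepOn_finset_iff]
  refine ⟨fun F => ((inc F X : ℤ) : 𝔽), ?_, ?_⟩
  · rw [sum_image (erase_injOn X)]
    funext F'
    simp only [Finset.sum_apply, Pi.smul_apply, smul_eq_mul, bvec, Pi.zero_apply]
    rw [← Int.cast_zero, ← sum_inc_mul_inc_erase X F'.1]
    push_cast
    exact sum_congr rfl fun i _ => mul_comm _ _
  · obtain ⟨i, hi⟩ := hX
    exact ⟨X.erase i, mem_image_of_mem _ hi, (inc_cast_ne_zero_iff 𝔽).mpr ⟨i, hi, rfl⟩⟩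

/-- Each `X ∖ {i}` with `i ≠ j` is the only remaining facet of `X` containing `X ∖ {i, j}`. -/
lemma linearIndepOn_image_erase_erase {k : ℕ} {X : Finset (Fin n)} (hX : X.card = k + 1)
    {j : Fin n} (hj : j ∈ X) :
    LinearIndepOn 𝔽 (bvec 𝔽 n k) ((X.image X.erase).erase (X.erase j) : Set (Finset (Fin n))) := by
  refine linearIndepOn_finset_of_forall_exists_apply_ne_zero fun F hF => ?_
  obtain ⟨hFj, hF⟩ := mem_erase.mp hF
  obtain ⟨i, hi, rfl⟩ := mem_image.mp hF
  have hij : i ≠ j := by rintro rfl; exact hFj rfl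
  have hjX : j ∈ X.erase i := mem_erase.mpr ⟨hij.symm, hj⟩
  have hc : ((X.erase i).erase j).card = k - 1 := by
    rw [card_erase_of_mem hjX, card_erase_of_mem hi, hX]; rfl
  refine ⟨⟨_, hc⟩, bvec_erase_apply_ne_zero 𝔽 k hjX hc, fun G hG hGi => ?_⟩
  obtain ⟨hGj, hG⟩ := mem_erase.mp hG
  obtain ⟨i', hi', rfl⟩ := mem_image.mp hG
  have hi'i : i' ≠ i := fun h => hGi (h ▸ rfl)
  have hi'j : i' ≠ j := fun h => hGj (h ▸ rfl)
  change ((inc _ _ : ℤ) : 𝔽) = 0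
  rw [inc_eq_zero, Int.cast_zero]
  intro m _ heq
  have hmem : i' ∈ (X.erase i).erase j := mem_erase.mpr ⟨hi'j, mem_erase.mpr ⟨hi'i, hi'⟩⟩
  rw [show (X.erase i).erase j = _ from heq] at hmem
  exact notMem_erase i' X (mem_of_mem_erase hmem)

theorem simCircuit_suppFin_pbdry {k : ℕ} {Sk : Finset (Finset (Fin n))} {X : Finset (Fin n)}
    (hX : X.card = k + 1) (hface : ∀ i ∈ X, X.erase i ∈ Sk) : SimCircuit 𝔽 n k Sk (suppFin (pbdry 𝔽 Sk X)) := by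
  rw [suppFin_pbdry 𝔽 hface, simCircuit_iff 𝔽]
  refine ⟨fun F hF => ?_, not_linearIndepOn_image_erase 𝔽 k X (card_pos.mp (by omega)),
    fun C' hC' => ?_⟩
  · obtain ⟨i, hi, rfl⟩ := mem_image.mp hF
    exact hface i hi
  · obtain ⟨F, hF, hFC'⟩ := exists_of_ssubset hC'
    obtain ⟨j, hj, rfl⟩ := mem_image.mp hF
    exact (linearIndepOn_image_erase_erase 𝔽 hX hj).mono
      (coe_subset.mpr (subset_erase.mpr ⟨hC'.subset, hFC'⟩))

theorem SimCircuit.facetsShared {k : ℕ} {Sk C : Finset (Finset (Fin n))}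
    (hC : SimCircuit 𝔽 n k Sk C) (hSk : ∀ F ∈ Sk, F.card = k) : FacetsShared C := by
  obtain ⟨hCSk, hdep, hmin⟩ := (simCircuit_iff 𝔽).mp hC
  obtain ⟨g, hsum, hg⟩ := exists_sum_eq_zero_forall_ne_zero_of_minimal hdep hmin
  intro F hF i hi
  have hc : (F.erase i).card = k - 1 := by rw [card_erase_of_mem hi, hSk F (hCSk hF)]
  obtain ⟨G, hG, hGF, hGc⟩ := exists_ne_apply_ne_zero_of_sum_eq_zero hsum hF (hg F hF)
    (bvec_erase_apply_ne_zero 𝔽 k hi hc)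
  obtain ⟨m, -, heq⟩ := (inc_cast_ne_zero_iff 𝔽).mp hGc
  exact ⟨G, hG, hGF, (show F.erase i = G.erase m from heq) ▸ erase_subset m G⟩

lemma IsFace.erase_mem {k : ℕ} {Sk : Finset (Finset (Fin n))} {X : Finset (Fin n)}
    (hface : IsFace k Sk X) (hX : X.card = k + 1) {i : Fin n} (hi : i ∈ X) : X.erase i ∈ Sk := by
  rcases hface with hlt | hsub
  · omega
  · exact hsub _ (erase_subset i X) (by rw [card_erase_of_mem hi, hX]; rfl)

lemma isFace_of_forall_erase_mem {k : ℕ} {Sk : Finset (Finset (Fin n))} {X : Finset (Fin n)}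
    (hX : X.card = k + 1) (h : ∀ i ∈ X, X.erase i ∈ Sk) : IsFace k Sk X := by
  refine Or.inr fun G hGX hG => ?_
  obtain ⟨i, hiX, hiG⟩ := exists_mem_notMem_of_card_lt_card (s := G) (t := X) (by omega)
  suffices G = X.erase i from this ▸ h i hiX
  exact eq_of_subset_of_card_le (subset_erase.mpr ⟨hGX, hiG⟩) (by rw [card_erase_of_mem hiX]; omega)

end SimplicialMatroid

theorem stmt1_general (𝔽 : Type*) [Field 𝔽] (n k : ℕ) (hk : 2 ≤ k)
    (Sk : Finset (Finset (Fin n))) (hSk : ∀ F ∈ Sk, F.card = k) :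
    (∀ X : Finset (Fin n), X.card = k + 1 → IsFace k Sk X →
      SimCircuit 𝔽 n k Sk (suppFin (pbdry 𝔽 Sk X)) ∧ (suppFin (pbdry 𝔽 Sk X)).card = k + 1) ∧
    (∀ C : Finset (Finset (Fin n)), SimCircuit 𝔽 n k Sk C → C.card = k + 1 →
      ∃ X : Finset (Fin n), X.card = k + 1 ∧ IsFace k Sk X ∧ C = suppFin (pbdry 𝔽 Sk X)) := by
  constructor
  · intro X hX hface
    have hmem : ∀ i ∈ X, X.erase i ∈ Sk := fun i hi => hface.erase_mem hX hi
    refine ⟨simCircuit_suppFin_pbdry 𝔽 hX hmem, ?_⟩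
    rw [suppFin_pbdry 𝔽 hmem, card_image_of_injOn (erase_injOn X), hX]
  · intro C hC hcard
    have hCk : ∀ F ∈ C, F.card = k := fun F hF => hSk F (hC.1 hF)
    obtain ⟨X, hX, rfl⟩ := (hC.facetsShared 𝔽 hSk).exists_eq_image_erase (by omega) hCk hcard
    have hmem : ∀ i ∈ X, X.erase i ∈ Sk := fun i hi => hC.1 (mem_image_of_mem _ hi)
    exact ⟨X, hX, isFace_of_forall_erase_mem hX hmem, (suppFin_pbdry 𝔽 hmem).symm⟩

theorem stmt1 (𝔽 : Type*) [Field 𝔽] (n k : ℕ) (hk : 2 ≤ k) (hkn : k ≤ n)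
    (Sk : Finset (Finset (Fin n))) (hSk : ∀ F ∈ Sk, F.card = k) :
    (∀ X : Finset (Fin n), X.card = k + 1 → IsFace k Sk X →
      SimCircuit 𝔽 n k Sk (suppFin (pbdry 𝔽 Sk X)) ∧ (suppFin (pbdry 𝔽 Sk X)).card = k + 1) ∧
    (∀ C : Finset (Finset (Fin n)), SimCircuit 𝔽 n k Sk C → C.card = k + 1 →
      ∃ X : Finset (Fin n), X.card = k + 1 ∧ IsFace k Sk X ∧ C = suppFin (pbdry 𝔽 Sk X)) :=
  stmt1_general 𝔽 n k hk Sk hSk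
end

section
/- Let n ≥ k ≥ 2, let 𝔽 be a field and let S_k ⊆ C([n],k), and suppose Sim_k^n(S_k) has rank r. If (V_1,…,V_r) is a basic linear sequence for ⟨S_k⟩, then {δ^{k−1}V_1, δ^{k−1}V_2, …, δ^{k−1}V_r} is a basis of the cocircuit space of Sim_k^n(S_k). -/
/-!
Common definitions for simplicial matroids, following Cordovil–Lemos–Linhares Sales,
"Dirac's theorem on simplicial matroids".

We model `[n] = {1,…,n}` by `Fin n`, and a subset of `[n]` by a `Finset (Fin n)`.
A family `S_k ⊆ C([n],k)` is a `Finset (Finset (Fin n))` (all of whose members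
have cardinality `k`, which is imposed by hypotheses in the theorems).
-/

open Finset

/-!
Each coboundary `δ^{k-1} V` is orthogonal to the circuit space, since `⟨v, δ^{k-1} V⟩` is the
`V`-coordinate of `∂_k v`. Under the dot product the cocircuit space is the annihilator of
`ker ∂_k`, so its dimension is `rank ∂_k = r`. A cocircuit is nonempty, so each `C*_j` contains
a face on which `δ^{k-1} V_j` is nonzero while all earlier `δ^{k-1} V_i` vanish: the `r`
coboundaries form a triangular, hence independent, family in an `r`-dimensional space.
-/

theorem linearIndependent_of_triangular {𝔽 ι α : Type*} [Field 𝔽]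
    [LinearOrder ι] {f : ι → α → 𝔽} (h : ∀ j, ∃ a, f j a ≠ 0 ∧ ∀ i < j, f i a = 0) :
    LinearIndependent 𝔽 f := by
  classical
  rw [linearIndependent_iff']
  intro s g hsum i hi
  by_contra hgi
  set T := s.filter (g · ≠ 0)
  have hT : T.Nonempty := ⟨i, mem_filter.2 ⟨hi, hgi⟩⟩
  obtain ⟨hjs, hgj⟩ := mem_filter.1 (T.max'_mem hT)
  set j := T.max' hT
  obtain ⟨a, ha, hlt⟩ := h j
  have hsum_a : ∑ i ∈ s, g i * f i a = g j * f j a := by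
    refine sum_eq_single j (fun b hb hbj => ?_) (absurd hjs)
    by_cases hgb : g b = 0
    · rw [hgb, zero_mul]
    · rw [hlt b ((T.le_max' b (mem_filter.2 ⟨hb, hgb⟩)).lt_of_ne hbj), mul_zero]
  have hzero := congrFun hsum a
  simp only [Finset.sum_apply, Pi.smul_apply, smul_eq_mul, Pi.zero_apply, hsum_a] at hzero
  exact mul_ne_zero hgj ha hzero

theorem SimCocircuit.nonempty {𝔽 : Type*} [Field 𝔽] {n k : ℕ} {Sk C : Finset (Finset (Fin n))}
    (hC : SimCocircuit 𝔽 n k Sk C) : C.Nonempty := by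
  rw [nonempty_iff_ne_empty]
  rintro rfl
  simpa using hC.2.1

theorem mem_suppδ {𝔽 : Type*} [Field 𝔽] {n : ℕ} {Sk : Finset (Finset (Fin n))}
    {V F : Finset (Fin n)} : F ∈ suppδ 𝔽 Sk V ↔ ∃ hF : F ∈ Sk, cobdry 𝔽 Sk V ⟨F, hF⟩ ≠ 0 := by
  simp [suppδ, suppFin]

theorem exists_cobdry_ne_zero_of_mem_Cstar {𝔽 : Type*} [Field 𝔽] {n : ℕ}
    {Sk : Finset (Finset (Fin n))} {V : ℕ → Finset (Fin n)} {j : ℕ} {F : Finset (Fin n)}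
    (hF : F ∈ Cstar 𝔽 Sk V j) :
    ∃ G : Sk, cobdry 𝔽 Sk (V j) G ≠ 0 ∧ ∀ i < j, cobdry 𝔽 Sk (V i) G = 0 := by
  obtain ⟨hFj, hFi⟩ := mem_sdiff.1 hF
  obtain ⟨hFS, hne⟩ := mem_suppδ.1 hFj
  refine ⟨⟨F, hFS⟩, hne, fun i hij => ?_⟩
  by_contra hi
  exact hFi (mem_biUnion.2 ⟨i, mem_range.2 hij, mem_suppδ.2 ⟨hFS, hi⟩⟩)

theorem cobdry_mem_cocircSpace (𝔽 : Type*) [Field 𝔽] {n k : ℕ} (Sk : Finset (Finset (Fin n)))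
    {V : Finset (Fin n)} (hV : V.card = k - 1) : cobdry 𝔽 Sk V ∈ cocircSpace 𝔽 n k Sk := by
  intro v hv
  have hcoord := congrFun (LinearMap.mem_ker.1 hv) ⟨V, hV⟩
  simp only [bdryMap, Matrix.mulVecLin_apply, Matrix.mulVec, dotProduct, Matrix.of_apply,
    Pi.zero_apply] at hcoord
  simpa only [cobdry, mul_comm] using hcoord

theorem cocircSpace_eq_comap_dualAnnihilator (𝔽 : Type*) [Field 𝔽] (n k : ℕ)
    (Sk : Finset (Finset (Fin n))) [DecidableEq Sk] :
    cocircSpace 𝔽 n k Sk = ((LinearMap.ker (bdryMap 𝔽 n k Sk)).dualAnnihilator).comap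
      (dotProductEquiv 𝔽 Sk).toLinearMap := by
  ext w
  simp only [Submodule.mem_comap, Submodule.mem_dualAnnihilator, LinearEquiv.coe_coe,
    dotProductEquiv_apply_apply, dotProduct, mul_comm (w _)]
  rfl

theorem simRank_eq_finrank_range_bdryMap (𝔽 : Type*) [Field 𝔽] (n k : ℕ)
    (Sk : Finset (Finset (Fin n))) :
    simRank 𝔽 n k Sk = Module.finrank 𝔽 (LinearMap.range (bdryMap 𝔽 n k Sk)) := by
  rw [simRank, bdryMap, Matrix.range_mulVecLin, Set.image_eq_range]
  rfl

theorem finrank_cocircSpace (𝔽 : Type*) [Field 𝔽] (n k : ℕ) (Sk : Finset (Finset (Fin n))) :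
    Module.finrank 𝔽 (cocircSpace 𝔽 n k Sk) = simRank 𝔽 n k Sk := by
  classical
  have hann := Subspace.finrank_add_finrank_dualAnnihilator_eq (LinearMap.ker (bdryMap 𝔽 n k Sk))
  have hrank_nullity := LinearMap.finrank_range_add_finrank_ker (bdryMap 𝔽 n k Sk)
  rw [cocircSpace_eq_comap_dualAnnihilator, Submodule.comap_equiv_eq_map_symm,
    LinearEquiv.finrank_map_eq, simRank_eq_finrank_range_bdryMap]
  omega

theorem stmt4_general (𝔽 : Type*) [Field 𝔽] (n k : ℕ)
    (Sk : Finset (Finset (Fin n)))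
    (r : ℕ) (hr : simRank 𝔽 n k Sk = r) (V : ℕ → Finset (Fin n))
    (hV : BasicLinearSeq 𝔽 n k Sk r V) :
    LinearIndependent 𝔽 (fun j : Fin r => cobdry 𝔽 Sk (V j.1)) ∧
      Submodule.span 𝔽 (Set.range fun j : Fin r => cobdry 𝔽 Sk (V j.1))
        = cocircSpace 𝔽 n k Sk := by
  obtain ⟨-, hcard, hcocircuit⟩ := hV
  have hli : LinearIndependent 𝔽 (fun j : Fin r => cobdry 𝔽 Sk (V j.1)) := by
    refine linearIndependent_of_triangular fun j => ?_
    obtain ⟨F, hF⟩ := (hcocircuit j j.2).nonempty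
    obtain ⟨G, hG, hlt⟩ := exists_cobdry_ne_zero_of_mem_Cstar hF
    exact ⟨G, hG, fun i hij => hlt i hij⟩
  have hle : Submodule.span 𝔽 (Set.range fun j : Fin r => cobdry 𝔽 Sk (V j.1))
      ≤ cocircSpace 𝔽 n k Sk :=
    Submodule.span_le.2 <| Set.range_subset_iff.2 fun j => cobdry_mem_cocircSpace 𝔽 Sk (hcard j j.2)
  refine ⟨hli, Submodule.eq_of_le_of_finrank_le hle ?_⟩
  rw [finrank_span_eq_card hli, Fintype.card_fin, finrank_cocircSpace, hr]

theorem stmt4 (𝔽 : Type*) [Field 𝔽] (n k : ℕ) (hk : 2 ≤ k) (hkn : k ≤ n)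
    (Sk : Finset (Finset (Fin n))) (hSk : ∀ F ∈ Sk, F.card = k)
    (r : ℕ) (hr : simRank 𝔽 n k Sk = r) (V : ℕ → Finset (Fin n))
    (hV : BasicLinearSeq 𝔽 n k Sk r V) :
    LinearIndependent 𝔽 (fun j : Fin r => cobdry 𝔽 Sk (V j.1)) ∧
      Submodule.span 𝔽 (Set.range fun j : Fin r => cobdry 𝔽 Sk (V j.1))
        = cocircSpace 𝔽 n k Sk :=
  stmt4_general 𝔽 n k Sk r hr V hV
end
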